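/- arXiv:2105.02561 — 5 statements merged into one kernel-verified Lean document; each statement's English description precedes it below -/
import Mathlib

section
/- Let T be a triangulated category with a t-structure and let f : A → B be a morphism in T with A ∈ T_{≤0}. Then f factors as f = f̃ ∘ p, where p : A → Coim(f) is a t-epimorphism with Coim(f) ∈ T_{≤0}, and f̃ : Coim(f) → B is a t-monomorphism. More precisely, if F is defined by a distinguished triangle F → A → B, then Coim(f) sits in a distinguished triangle τ_{≤0}F → A → Coim(f) (where the first map is the composite τ_{≤0}F → F → A), and there is a morphism of distinguished triangles from (τ_{≤0}F → A → Coim(f)) to (F → A → B) which is the natural map τ_{≤0}F → F on the first term, the identity of A on the second, and f̃ on the third. -/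
open CategoryTheory Limits Pretriangulated Triangulated Opposite

namespace DGP

universe v u

variable {C : Type u} [Category.{v} C] [Preadditive C] [HasZeroObject C] [HasShift C ℤ]
  [∀ n : ℤ, (shiftFunctor C n).Additive] [Pretriangulated C]

/-- A morphism `f : A ⟶ B` is a t-monomorphism if its cone lies in `T_{≥0}`. -/
def IsTMono (t : TStructure C) {A B : C} (f : A ⟶ B) : Prop :=
  ∃ (Z : C) (g : B ⟶ Z) (h : Z ⟶ A⟦(1 : ℤ)⟧),
    Triangle.mk f g h ∈ (distTriang C) ∧ t.ge 0 Z

/-- A morphism `f : A ⟶ B` is a t-epimorphism if `cone(f)[-1]` lies in `T_{≤0}`,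
equivalently it fits in a distinguished triangle `Z ⟶ A ⟶ B` with `Z ∈ T_{≤0}`. -/
def IsTEpi (t : TStructure C) {A B : C} (f : A ⟶ B) : Prop :=
  ∃ (Z : C) (g : Z ⟶ A) (h : B ⟶ Z⟦(1 : ℤ)⟧),
    Triangle.mk g f h ∈ (distTriang C) ∧ t.le 0 Z

/-- The heart of a t-structure, as a full subcategory. -/
abbrev Heart (t : TStructure C) := ObjectProperty.FullSubcategory (fun X => t.le 0 X ∧ t.ge 0 X)

/-- The inclusion of the heart. -/
abbrev heartι (t : TStructure C) : Heart t ⥤ C := ObjectProperty.ι _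

/-- Truncation data for a t-structure: truncation functors `τ≤n`, `τ≥n` together with
their universal properties and the truncation distinguished triangles. -/
structure TruncData (t : TStructure C) where
  τle : ℤ → C ⥤ C
  τge : ℤ → C ⥤ C
  τleLE : ∀ (n : ℤ) (X : C), t.le n ((τle n).obj X)
  τgeGE : ∀ (n : ℤ) (X : C), t.ge n ((τge n).obj X)
  ι : ∀ n : ℤ, τle n ⟶ 𝟭 C
  π : ∀ n : ℤ, 𝟭 C ⟶ τge n
  le_univ : ∀ (n : ℤ) (X Y : C), t.le n X →
    Function.Bijective (fun (f : X ⟶ (τle n).obj Y) => f ≫ (ι n).app Y)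
  ge_univ : ∀ (n : ℤ) (X Y : C), t.ge n Y →
    Function.Bijective (fun (f : (τge n).obj X ⟶ Y) => (π n).app X ≫ f)
  δ : ∀ (n : ℤ) (X : C), (τge (n + 1)).obj X ⟶ ((τle n).obj X)⟦(1 : ℤ)⟧
  tri : ∀ (n : ℤ) (X : C),
    Triangle.mk ((ι n).app X) ((π (n + 1)).app X) (δ n X) ∈ distTriang C
  τge_LE : ∀ (n m : ℤ) (X : C), t.le m X → t.le m ((τge n).obj X)

variable {t : TStructure C}

/-- The cohomological functor `H^0 = τ≥0 τ≤0 : C ⥤ Heart t`. -/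
def H0 (d : TruncData t) : C ⥤ Heart t :=
  ObjectProperty.lift _ (d.τle 0 ⋙ d.τge 0)
    (fun X => ⟨d.τge_LE 0 0 _ (d.τleLE 0 X), d.τgeGE 0 _⟩)

/-- The cohomology functors `H^n(X) = H^0(X⟦n⟧)`. -/
def Hn (d : TruncData t) (n : ℤ) : C ⥤ Heart t :=
  shiftFunctor C n ⋙ H0 d

/-- An object `E` is a derived injective if there is an injective object `I` of the heart
and a natural isomorphism `T(−, E) ≅ T^♥(H^0(−), I)`. -/
def IsDerivedInjective (d : TruncData t) (E : C) : Prop :=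
  ∃ I : Heart t, Injective I ∧ Nonempty (yoneda.obj E ≅ (H0 d).op ⋙ yoneda.obj I)

/-- The t-structure is non-degenerate if objects with vanishing cohomologies are zero. -/
def NonDegenerate (d : TruncData t) : Prop :=
  ∀ X : C, (∀ n : ℤ, IsZero ((Hn d n).obj X)) → IsZero X

end DGP

open DGP

/-!
Let `ι : τ≤0 K ⟶ K` be the truncation. `Coim` is a cone of `ι ≫ k`, and `f̃` completes `(ι, 𝟙 A)`
to a morphism of triangles. `Coim ∈ T≤0` because it is an extension of `(τ≤0 K)[1]` by `A`.

With the octahedral axiom one would identify `cone f̃ ≅ (τ≥1 K)[1]`; in a pretriangulated category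
we show instead that `Hom(X, cone f̃) = 0` for `X ∈ T≤-1`. As `Hom(X, (τ≥1 K)[1]) = 0`, the map
`ι[1]` is surjective and `ι[2]` injective on `Hom(X, -)`; a chase through the two triangles then
shows that `f̃` is surjective and `f̃[1]` injective on `Hom(X, -)`, which kills `Hom(X, cone f̃)`.
-/

namespace DGP

variable {C : Type*} [Category C] [Preadditive C] [HasZeroObject C] [HasShift C ℤ]
  [∀ n : ℤ, (shiftFunctor C n).Additive] [Pretriangulated C]

section Cone

variable {K' K Q X : C} {i : K' ⟶ K} {q : K ⟶ Q} {δ : Q ⟶ K'⟦(1 : ℤ)⟧}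
  (hQ : Triangle.mk i q δ ∈ distTriang C) (hX : ∀ g : X ⟶ Q⟦(1 : ℤ)⟧, g = 0)
include hQ hX

lemma exists_eq_comp_shift_map_of_distTriang (γ : X ⟶ K⟦(1 : ℤ)⟧) :
    ∃ ε : X ⟶ K'⟦(1 : ℤ)⟧, γ = ε ≫ i⟦(1 : ℤ)⟧' := by
  obtain ⟨ε, hε⟩ := Triangle.coyoneda_exact₁ _ (rot_of_distTriang _ hQ) γ (hX _)
  exact ⟨-ε, hε.trans ((Preadditive.comp_neg _ _).trans (Preadditive.neg_comp _ _).symm)⟩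

lemma eq_zero_of_comp_shift_shift_map_eq_zero (ε : X ⟶ K'⟦(1 : ℤ)⟧⟦(1 : ℤ)⟧)
    (hε : ε ≫ i⟦(1 : ℤ)⟧'⟦(1 : ℤ)⟧' = 0) : ε = 0 := by
  obtain ⟨g, rfl⟩ := Triangle.coyoneda_exact₁ _
    (rot_of_distTriang _ (rot_of_distTriang _ (rot_of_distTriang _ hQ))) ε
    (show ε ≫ (-i⟦(1 : ℤ)⟧')⟦(1 : ℤ)⟧' = 0 by
      rw [Functor.map_neg, Preadditive.comp_neg, hε, neg_zero])
  obtain rfl := hX g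
  exact zero_comp

end Cone

section Chase

variable {X K' K A C' B : C} {i : K' ⟶ K} {k : K ⟶ A} {p : A ⟶ C'} {f : A ⟶ B}
  {δ' : C' ⟶ K'⟦(1 : ℤ)⟧} {b : B ⟶ K⟦(1 : ℤ)⟧} {ft : C' ⟶ B}
  (hT' : Triangle.mk (i ≫ k) p δ' ∈ distTriang C) (hT : Triangle.mk k f b ∈ distTriang C)
  (hp : p ≫ ft = f) (hb : δ' ≫ i⟦(1 : ℤ)⟧' = ft ≫ b)
  (hsurj : ∀ γ : X ⟶ K⟦(1 : ℤ)⟧, ∃ ε : X ⟶ K'⟦(1 : ℤ)⟧, γ = ε ≫ i⟦(1 : ℤ)⟧')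
include hT' hT hp hb hsurj

lemma exists_eq_comp_hom₃ (β : X ⟶ B) : ∃ σ : X ⟶ C', β = σ ≫ ft := by
  obtain ⟨ε, hε⟩ := hsurj (β ≫ b)
  have hbk : b ≫ k⟦(1 : ℤ)⟧' = 0 := comp_distTriang_mor_zero₃₁ _ hT
  obtain ⟨σ, rfl⟩ : ∃ σ : X ⟶ C', ε = σ ≫ δ' := Triangle.coyoneda_exact₁ _ hT' ε
    (show ε ≫ (i ≫ k)⟦(1 : ℤ)⟧' = 0 by
      rw [Functor.map_comp, ← Category.assoc, ← hε, Category.assoc, hbk, comp_zero])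
  obtain ⟨ρ, hρ⟩ : ∃ ρ : X ⟶ A, β - σ ≫ ft = ρ ≫ f := Triangle.coyoneda_exact₃ _ hT _
    (show (β - σ ≫ ft) ≫ b = 0 by
      rw [Preadditive.sub_comp, hε, Category.assoc, Category.assoc, hb, sub_self])
  exact ⟨ρ ≫ p + σ, by rw [Preadditive.add_comp, Category.assoc, hp, ← hρ, sub_add_cancel]⟩

lemma eq_zero_of_comp_shift_hom₃_eq_zero
    (hinj : ∀ ε : X ⟶ K'⟦(1 : ℤ)⟧⟦(1 : ℤ)⟧, ε ≫ i⟦(1 : ℤ)⟧'⟦(1 : ℤ)⟧' = 0 → ε = 0)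
    (ψ : X ⟶ C'⟦(1 : ℤ)⟧) (hψ : ψ ≫ ft⟦(1 : ℤ)⟧' = 0) : ψ = 0 := by
  have hδ' : ψ ≫ δ'⟦(1 : ℤ)⟧' = 0 := hinj _ (by
    rw [Category.assoc, ← Functor.map_comp, hb, Functor.map_comp, ← Category.assoc, hψ,
      zero_comp])
  obtain ⟨α, hα⟩ : ∃ α : X ⟶ A⟦(1 : ℤ)⟧, ψ = α ≫ (-p⟦(1 : ℤ)⟧') :=
    Triangle.coyoneda_exact₁ _ (rot_of_distTriang _ (rot_of_distTriang _ hT')) ψ hδ'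
  rw [Preadditive.comp_neg, ← Preadditive.neg_comp] at hα
  obtain ⟨γ, hγ⟩ : ∃ γ : X ⟶ K⟦(1 : ℤ)⟧, -α = γ ≫ (-k⟦(1 : ℤ)⟧') :=
    Triangle.coyoneda_exact₁ _ (rot_of_distTriang _ hT) (-α)
      (show (-α) ≫ f⟦(1 : ℤ)⟧' = 0 by rw [← hp, Functor.map_comp, ← Category.assoc, ← hα, hψ])
  obtain ⟨ε, rfl⟩ := hsurj γ
  have hikp : i ≫ k ≫ p = 0 := by
    rw [← Category.assoc]
    exact comp_distTriang_mor_zero₁₂ _ hT'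
  rw [hα, hγ, Preadditive.comp_neg, Preadditive.neg_comp, Category.assoc, Category.assoc,
    ← Functor.map_comp, ← Functor.map_comp, hikp, Functor.map_zero, comp_zero, neg_zero]

lemma eq_zero_of_hom_to_cone_hom₃
    (hinj : ∀ ε : X ⟶ K'⟦(1 : ℤ)⟧⟦(1 : ℤ)⟧, ε ≫ i⟦(1 : ℤ)⟧'⟦(1 : ℤ)⟧' = 0 → ε = 0)
    {Z : C} {u : B ⟶ Z} {v : Z ⟶ C'⟦(1 : ℤ)⟧} (hZ : Triangle.mk ft u v ∈ distTriang C)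
    (φ : X ⟶ Z) : φ = 0 := by
  have hvft : v ≫ ft⟦(1 : ℤ)⟧' = 0 := comp_distTriang_mor_zero₃₁ _ hZ
  have hftu : ft ≫ u = 0 := comp_distTriang_mor_zero₁₂ _ hZ
  obtain ⟨β, rfl⟩ : ∃ β : X ⟶ B, φ = β ≫ u := Triangle.coyoneda_exact₃ _ hZ φ
    (eq_zero_of_comp_shift_hom₃_eq_zero hT' hT hp hb hsurj hinj (φ ≫ v)
      (by rw [Category.assoc, hvft, comp_zero]))
  obtain ⟨σ, rfl⟩ := exists_eq_comp_hom₃ hT' hT hp hb hsurj β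
  rw [Category.assoc, hftu, comp_zero]

end Chase

lemma isLE₃_of_distTriang (t : TStructure C) (T : Triangle C) (hT : T ∈ distTriang C) (n : ℤ)
    (h₁ : t.IsLE T.obj₁ (n + 1)) (h₂ : t.IsLE T.obj₂ n) : t.IsLE T.obj₃ n :=
  t.isLE₂ _ (rot_of_distTriang _ hT) n h₂ (t.isLE_shift T.obj₁ (n + 1) 1 n)

lemma isGE_cone_hom₃_of_isGE_cone_hom₁ (t : TStructure C) {K' K Q A C' B Z : C}
    {i : K' ⟶ K} {q : K ⟶ Q} {δ : Q ⟶ K'⟦(1 : ℤ)⟧} {k : K ⟶ A} {p : A ⟶ C'} {f : A ⟶ B}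
    {δ' : C' ⟶ K'⟦(1 : ℤ)⟧} {b : B ⟶ K⟦(1 : ℤ)⟧} {ft : C' ⟶ B} {u : B ⟶ Z}
    {v : Z ⟶ C'⟦(1 : ℤ)⟧} (hQ : Triangle.mk i q δ ∈ distTriang C) (hQ₁ : t.IsGE Q 1)
    (hT' : Triangle.mk (i ≫ k) p δ' ∈ distTriang C) (hT : Triangle.mk k f b ∈ distTriang C)
    (hp : p ≫ ft = f) (hb : δ' ≫ i⟦(1 : ℤ)⟧' = ft ≫ b)
    (hZ : Triangle.mk ft u v ∈ distTriang C) : t.IsGE Z 0 := by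
  rw [t.isGE_iff_orthogonal (-1) 0 (by norm_num)]
  intro X φ hX
  have hXQ : ∀ g : X ⟶ Q⟦(1 : ℤ)⟧, g = 0 := fun g =>
    have := t.isGE_shift Q 1 1 0
    t.zero g (-1) 0
  exact eq_zero_of_hom_to_cone_hom₃ hT' hT hp hb (exists_eq_comp_shift_map_of_distTriang hQ hXQ)
    (eq_zero_of_comp_shift_shift_map_eq_zero hQ hXQ) hZ φ

end DGP

/-- The t-epi/t-mono factorization: given `f : A ⟶ B` with `A ∈ T_{≤0}` and a distinguished
triangle `K ⟶ A ⟶ B`, there are a distinguished triangle `τ≤0 K ⟶ A ⟶ Coim f` (whose first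
map is the composite `τ≤0 K ⟶ K ⟶ A`), with `Coim f ∈ T_{≤0}`, a t-epimorphism
`p : A ⟶ Coim f`, a t-monomorphism `f̃ : Coim f ⟶ B` with `p ≫ f̃ = f`, and a morphism of
distinguished triangles from `(τ≤0 K ⟶ A ⟶ Coim f)` to `(K ⟶ A ⟶ B)` given by the natural
map `τ≤0 K ⟶ K` on the first vertex, the identity of `A` on the second, and `f̃` on the
third. -/
theorem stmt4 {C : Type*} [Category C]
    [Preadditive C] [HasZeroObject C] [HasShift C ℤ] [∀ n : ℤ, (shiftFunctor C n).Additive]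
    [Pretriangulated C]
    (t : TStructure C) (d : TruncData t) {A B : C} (f : A ⟶ B) (hA : t.le 0 A)
    (K : C) (k : K ⟶ A) (b : B ⟶ K⟦(1 : ℤ)⟧)
    (hK : Triangle.mk k f b ∈ distTriang C) :
    ∃ (Coim : C) (p : A ⟶ Coim) (ft : Coim ⟶ B)
      (δ' : Coim ⟶ ((d.τle 0).obj K)⟦(1 : ℤ)⟧),
      Triangle.mk ((d.ι 0).app K ≫ k) p δ' ∈ (distTriang C) ∧
      t.le 0 Coim ∧ IsTEpi t p ∧ IsTMono t ft ∧ p ≫ ft = f ∧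
      ∃ φ : Triangle.mk ((d.ι 0).app K ≫ k) p δ' ⟶ Triangle.mk k f b,
        φ.hom₁ = (d.ι 0).app K ∧ φ.hom₂ = 𝟙 A ∧ φ.hom₃ = ft := by
  obtain ⟨Coim, p, δ', hT'⟩ := distinguished_cocone_triangle ((d.ι 0).app K ≫ k)
  obtain ⟨ft, hp, hb⟩ : ∃ ft : Coim ⟶ B, p ≫ ft = 𝟙 A ≫ f ∧
      δ' ≫ ((d.ι 0).app K)⟦(1 : ℤ)⟧' = ft ≫ b :=
    complete_distinguished_triangle_morphism _ _ hT' hK ((d.ι 0).app K) (𝟙 A) (Category.comp_id _)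
  rw [Category.id_comp] at hp
  obtain ⟨Z, u, v, hZ⟩ := distinguished_cocone_triangle ft
  have hQ : Triangle.mk ((d.ι 0).app K) ((d.π 1).app K) (d.δ 0 K) ∈ distTriang C := d.tri 0 K
  have hCoim : t.le 0 Coim :=
    (isLE₃_of_distTriang t _ hT' 0 ⟨t.le_monotone zero_le_one _ (d.τleLE 0 K)⟩ ⟨hA⟩).le
  have hZ₀ : t.ge 0 Z :=
    (isGE_cone_hom₃_of_isGE_cone_hom₁ t hQ ⟨d.τgeGE 1 K⟩ hT' hK hp hb hZ).ge
  exact ⟨Coim, p, ft, δ', hT', hCoim, ⟨_, _, _, hT', d.τleLE 0 K⟩, ⟨Z, u, v, hZ, hZ₀⟩, hp,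
    Triangle.homMk _ _ _ _ _ (Category.comp_id _) (hp.trans (Category.id_comp f).symm) hb,
    rfl, rfl, rfl⟩
end

section
/- Let T be a triangulated category with a t-structure, let I be an injective object of the heart T^♥, and suppose the derived injective L(I) associated to I exists, i.e. there is an isomorphism of functors T(−, L(I)) ≅ T^♥(H^0(−), I) on T^op. Then: (1) L(I) ∈ T_{≥0}; (2) H^0(L(I)) ≅ I; and (3) for every A ∈ T, the map induced by H^0, namely T(A, L(I)) → T^♥(H^0(A), H^0(L(I))) ≅ T^♥(H^0(A), I), is an isomorphism. -/
open CategoryTheory Limits Pretriangulated Triangulated Opposite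

open DGP

/-!
A map `X ⟶ L(I)` with `X ∈ T_{≤-1}` corresponds to a map `H⁰(X) ⟶ I`, and `H⁰(X) ∈ T_{≤-1}`
while `I ∈ T_{≥0}`; hence `L(I)` is right orthogonal to `T_{≤-1}`, i.e. `L(I) ∈ T_{≥0}`.
Naturality of the Yoneda isomorphism writes it as `f ↦ H⁰(f) ≫ u` with `u : H⁰(L(I)) ⟶ I` the
image of the identity. For `K` in the heart and `L ∈ T_{≥0}`, `H⁰` induces the bijection
`T(K, L) ≅ T(K, τ_{≤0} L) ≅ T^♥(K, H⁰ L)`, since `τ_{≤0} L` lies in the heart. So composing with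
`u` is bijective on `T^♥(K, -)` for every `K` in the heart, and `u` is an isomorphism by Yoneda.
-/

namespace DGP

open Category

variable {C : Type*} [Category C] [Preadditive C] [HasZeroObject C] [HasShift C ℤ]
  [∀ n : ℤ, (shiftFunctor C n).Additive] [Pretriangulated C]

lemma eq_zero_of_comp_mor₁_eq_zero {T : Triangle C} (hT : T ∈ distTriang C) {X : C}
    {f : X ⟶ T.obj₁} (hf : f ≫ T.mor₁ = 0) (h : ∀ g : X ⟶ T.obj₃⟦(-1 : ℤ)⟧, g = 0) :
    f = 0 := by
  obtain ⟨g, rfl⟩ := Triangle.coyoneda_exact₂ _ (inv_rot_of_distTriang _ hT) f hf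
  rw [h g]
  exact zero_comp

lemma bijective_comp_of_iso {D : Type*} [Category D] {T T' X Y : D} (γ : T ≅ T') (u : X ⟶ Y)
    (h : Function.Bijective (fun g : T' ⟶ X => g ≫ u)) :
    Function.Bijective (fun g : T ⟶ X => g ≫ u) := by
  have : (fun g : T ⟶ X => g ≫ u) =
      γ.symm.homFromEquiv ∘ (fun g : T' ⟶ X => g ≫ u) ∘ γ.homFromEquiv := by
    ext g
    simp
  rw [this]
  exact γ.symm.homFromEquiv.bijective.comp (h.comp γ.homFromEquiv.bijective)

namespace TruncData

variable {t : TStructure C}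

lemma ge_zero_of_forall_hom_eq_zero (d : TruncData t) (Y : C)
    (h : ∀ X : C, t.le (-1) X → ∀ f : X ⟶ Y, f = 0) : t.ge 0 Y := by
  have hT := d.tri (-1) Y
  have hτ : t.ge 1 (((d.τge (-1 + 1)).obj Y)⟦(-1 : ℤ)⟧) :=
    t.ge_shift (-1 + 1) (-1) 1 (by omega) _ (d.τgeGE (-1 + 1) Y)
  have hzero : IsZero ((d.τle (-1)).obj Y) := by
    rw [IsZero.iff_id_eq_zero]
    refine eq_zero_of_comp_mor₁_eq_zero hT ((id_comp _).trans (h _ (d.τleLE (-1) Y) _))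
      fun g => ?_
    exact t.zero_of_isLE_of_isGE g (-1) 1 (by omega) ⟨d.τleLE (-1) Y⟩ ⟨hτ⟩
  have : IsIso ((d.π (-1 + 1)).app Y) := (Triangle.isZero₁_iff_isIso₂ _ hT).1 hzero
  have hge : t.ge 0 ((d.τge (-1 + 1)).obj Y) := by simpa using d.τgeGE (-1 + 1) Y
  exact (t.ge 0).prop_of_iso (asIso ((d.π (-1 + 1)).app Y)).symm hge

lemma isIso_ι_app_of_le (d : TruncData t) {n : ℤ} {X : C} (hX : t.le n X) :
    IsIso ((d.ι n).app X) := by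
  obtain ⟨s, hs⟩ := (d.le_univ n X X hX).2 (𝟙 X)
  simp only at hs
  refine ⟨s, (d.le_univ n _ X (d.τleLE n X)).1 ?_, hs⟩
  simp [hs]

lemma isIso_π_app_of_ge (d : TruncData t) {n : ℤ} {X : C} (hX : t.ge n X) :
    IsIso ((d.π n).app X) := by
  obtain ⟨r, hr⟩ := (d.ge_univ n X X hX).2 (𝟙 X)
  simp only at hr
  refine ⟨r, hr, (d.ge_univ n X _ (d.τgeGE n X)).1 ?_⟩
  simp [reassoc_of% hr]

lemma ge_zero_τle_zero_obj (d : TruncData t) {W : C} (hW : t.ge 0 W) :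
    t.ge 0 ((d.τle 0).obj W) := by
  refine d.ge_zero_of_forall_hom_eq_zero _ fun X hX f => ?_
  have hτ : t.ge 2 (((d.τge (0 + 1)).obj W)⟦(-1 : ℤ)⟧) :=
    t.ge_shift (0 + 1) (-1) 2 (by omega) _ (d.τgeGE (0 + 1) W)
  refine eq_zero_of_comp_mor₁_eq_zero (d.tri 0 W)
    (t.zero_of_isLE_of_isGE _ (-1) 0 (by omega) ⟨hX⟩ ⟨hW⟩) fun g => ?_
  exact t.zero_of_isLE_of_isGE g (-1) 2 (by omega) ⟨hX⟩ ⟨hτ⟩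

lemma le_H0_obj_of_le (d : TruncData t) {X : C} (hX : t.le (-1) X) :
    t.le (-1) ((H0 d).obj X).obj := by
  have := d.isIso_ι_app_of_le (t.le_monotone (by omega : (-1 : ℤ) ≤ 0) _ hX)
  exact d.τge_LE 0 (-1) _ ((t.le (-1)).prop_of_iso (asIso ((d.ι 0).app X)).symm hX)

lemma subsingleton_H0_obj_hom_of_le (d : TruncData t) {X : C} (hX : t.le (-1) X)
    (J : Heart t) : Subsingleton ((H0 d).obj X ⟶ J) where
  allEq a b := ObjectProperty.hom_ext _ <|
    (t.zero_of_isLE_of_isGE a.hom (-1) 0 (by omega) ⟨d.le_H0_obj_of_le hX⟩ ⟨J.property.2⟩).trans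
      (t.zero_of_isLE_of_isGE b.hom (-1) 0 (by omega) ⟨d.le_H0_obj_of_le hX⟩ ⟨J.property.2⟩).symm

noncomputable def isoH0Obj (d : TruncData t) (K : Heart t) : K ≅ (H0 d).obj K.obj :=
  have := d.isIso_ι_app_of_le K.property.1
  have := d.isIso_π_app_of_ge
    ((t.ge 0).prop_of_iso (asIso ((d.ι 0).app K.obj)).symm K.property.2)
  ObjectProperty.isoMk _ ((asIso ((d.ι 0).app K.obj)).symm ≪≫
    asIso ((d.π 0).app ((d.τle 0).obj K.obj)) : K.obj ≅ (d.τge 0).obj ((d.τle 0).obj K.obj))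

lemma H0_map_bijective_of_ge (d : TruncData t) {L : C} (hL : t.ge 0 L) (K : Heart t) :
    Function.Bijective (fun f : K.obj ⟶ L => (H0 d).map f) := by
  have := d.isIso_ι_app_of_le K.property.1
  have := d.isIso_π_app_of_ge (d.ge_zero_τle_zero_obj hL)
  let Ψ : ((H0 d).obj K.obj ⟶ (H0 d).obj L) ≃ (K.obj ⟶ L) :=
    (d.isoH0Obj K).symm.homFromEquiv.trans <| (ObjectProperty.fullyFaithfulι _).homEquiv.trans <|
      (asIso ((d.π 0).app ((d.τle 0).obj L))).symm.homToEquiv.trans <|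
        Equiv.ofBijective _ (d.le_univ 0 K.obj L K.property.1)
  have hΨ : Ψ ∘ (fun f : K.obj ⟶ L => (H0 d).map f) = id := funext fun f => by
    have hπ := (d.π 0).naturality ((d.τle 0).map f)
    have hι := (d.ι 0).naturality f
    dsimp only [Functor.id_obj, Functor.id_map] at hπ hι
    change (((inv ((d.ι 0).app K.obj) ≫ (d.π 0).app ((d.τle 0).obj K.obj)) ≫
      (d.τge 0).map ((d.τle 0).map f)) ≫ inv ((d.π 0).app ((d.τle 0).obj L))) ≫ (d.ι 0).app L = f
    simp only [assoc, ← hπ, IsIso.hom_inv_id_assoc, hι, IsIso.inv_hom_id_assoc]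
  exact (Function.Bijective.of_comp_iff' Ψ.bijective _).1 (hΨ ▸ Function.bijective_id)

end TruncData

end DGP

/-- Let `I` be an injective object of the heart of a t-structure and suppose the derived
injective `L(I)` exists, i.e. there is a natural isomorphism `T(−, L(I)) ≅ T^♥(H^0(−), I)`.
Then (1) `L(I) ∈ T_{≥0}`; (2) `H^0(L(I)) ≅ I`; (3) for every `A`, the map
`T(A, L(I)) → T^♥(H^0(A), H^0(L(I)))` induced by `H^0` is an isomorphism. -/
theorem stmt6 {C : Type*} [Category C]
    [Preadditive C] [HasZeroObject C] [HasShift C ℤ] [∀ n : ℤ, (shiftFunctor C n).Additive]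
    [Pretriangulated C]
    (t : TStructure C) (d : TruncData t) (I : Heart t) (hI : Injective I)
    (L : C) (e : yoneda.obj L ≅ (H0 d).op ⋙ yoneda.obj I) :
    t.ge 0 L ∧ Nonempty ((H0 d).obj L ≅ I) ∧
      ∀ A : C, Function.Bijective (fun f : A ⟶ L => (H0 d).map f) := by
  set u : (H0 d).obj L ⟶ I := e.hom.app (op L) (𝟙 L)
  have he : ∀ A : C, Function.Bijective ((· ≫ u) ∘ fun f : A ⟶ L => (H0 d).map f) := by
    intro A
    have hnat : ((· ≫ u) ∘ fun f : A ⟶ L => (H0 d).map f) = e.hom.app (op A) := by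
      funext f
      simpa using (NatTrans.naturality_apply e.hom f.op (𝟙 L)).symm
    rw [hnat]
    exact (isIso_iff_bijective _).1 inferInstance
  have hL : t.ge 0 L := d.ge_zero_of_forall_hom_eq_zero L fun X hX f =>
    have := d.subsingleton_H0_obj_hom_of_le hX I
    (he X).1 (Subsingleton.elim _ _)
  have : IsIso u := isIso_of_yoneda_map_bijective u fun K =>
    bijective_comp_of_iso (d.isoH0Obj K) u
      ((Function.Bijective.of_comp_iff _ (d.H0_map_bijective_of_ge hL K)).1 (he K.obj))
  exact ⟨hL, ⟨asIso u⟩, fun A =>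
    (Function.Bijective.of_comp_iff' (asIso u).homToEquiv.bijective _).1 (he A)⟩
end

section
/- Let T be a triangulated category with a t-structure and E ∈ T. The following are equivalent: (1) E is a derived injective, i.e. there is an injective object I of T^♥ and a natural isomorphism T(−, E) ≅ T^♥(H^0(−), I); (2) E ∈ T_{≥0} and T(Z[-1], E) ≅ 0 for every Z ∈ T_{≥0}. -/
open CategoryTheory Limits Pretriangulated Triangulated Opposite

open DGP

/-!
If `T(−, E) ≅ T^♥(H^0(−), I)`, every map `X ⟶ E` vanishes as soon as `H^0(X) = 0`. This is the
case for `X ∈ T_{≤-1}`, which forces `E ∈ T_{≥0}`, and for `X ∈ T_{≥1}`, such as `Z[-1]` with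
`Z ∈ T_{≥0}`.

Conversely, the truncation triangle `τ_{≤0}X → X → τ_{≥1}X → (τ_{≤0}X)[1]` and the vanishing of
maps from `τ_{≥1}X` and `(τ_{≥1}X)[-1]` to `E` give `T(X, E) ≅ T(τ_{≤0}X, E) ≅ T^♥(H^0 X, τ_{≤0}E)`, and
`τ_{≤0}E` lies in the heart because `E ∈ T_{≥0}`. It is injective there: the cone of a
monomorphism of the heart lies in `T_{≥0}`, so maps into `E` extend along it.
-/

universe v

section

variable {C D : Type*} [Category.{v} C] [Category.{v} D] [HasZeroMorphisms C]

lemma eq_zero_of_yoneda_iso_of_isZero {F : C ⥤ D} {E : C} {I : D}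
    (e : yoneda.obj E ≅ F.op ⋙ yoneda.obj I) {X : C} (hX : IsZero (F.obj X)) (f : X ⟶ E) :
    f = 0 :=
  (e.app (op X)).toEquiv.injective (hX.eq_of_src _ _)

end

namespace DGP

variable {C : Type*} [Category C] [Preadditive C] [HasZeroObject C] [HasShift C ℤ]
  [∀ n : ℤ, (shiftFunctor C n).Additive] [Pretriangulated C] {t : TStructure C}

lemma eq_zero_of_ge_one {E : C} (hvan : ∀ Z, t.ge 0 Z → ∀ f : Z⟦(-1 : ℤ)⟧ ⟶ E, f = 0)
    {V : C} (hV : t.ge 1 V) (g : V ⟶ E) : g = 0 := by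
  let e := shiftFunctorCompIsoId C (1 : ℤ) (-1) (by norm_num)
  rw [← cancel_epi (e.hom.app V), comp_zero]
  exact hvan _ (t.ge_shift 1 1 0 (by norm_num) V hV) _

lemma exists_comp_eq_of_isTMono {E : C} (hvan : ∀ Z, t.ge 0 Z → ∀ f : Z⟦(-1 : ℤ)⟧ ⟶ E, f = 0)
    {A B : C} {f : A ⟶ B} (hf : IsTMono t f) (g : A ⟶ E) : ∃ h : B ⟶ E, f ≫ h = g := by
  obtain ⟨Z, u, v, hT, hZ⟩ := hf
  obtain ⟨h, hh⟩ := Triangle.yoneda_exact₂ _ (inv_rot_of_distTriang _ hT) g (hvan Z hZ _)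
  exact ⟨h, hh.symm⟩

namespace TruncData

lemma eq_zero_of_comp_mono_hom (d : TruncData t) {A B : Heart t} (m : A ⟶ B) [Mono m]
    {V : C} (hV : t.le 0 V) (k : V ⟶ A.obj) (hk : k ≫ m.hom = 0) : k = 0 := by
  obtain ⟨k₁, rfl⟩ := (d.ge_univ 0 V A.obj A.property.2).2 k
  let V' : Heart t := ⟨(d.τge 0).obj V, d.τge_LE 0 0 V hV, d.τgeGE 0 V⟩
  have : (ObjectProperty.homMk k₁ : V' ⟶ A) = 0 := by
    rw [← cancel_mono m, zero_comp]
    ext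
    apply (d.ge_univ 0 V B.obj B.property.2).1
    simpa using hk
  simp [show k₁ = 0 from congrArg InducedCategory.Hom.hom this]

lemma isTMono_hom_of_mono (d : TruncData t) {A B : Heart t} (m : A ⟶ B) [Mono m] :
    IsTMono t m.hom := by
  obtain ⟨Z, u, v, hT⟩ := distinguished_cocone_triangle m.hom
  refine ⟨Z, u, v, hT, ?_⟩
  have hT₁ := inv_rot_of_distTriang _ hT
  have hT₂ := inv_rot_of_distTriang _ hT₁
  -- A map `W ⟶ Z⟦-1⟧` from `W ∈ T_{≤0}` dies in `A` because `m` is mono in the heart,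
  -- so it factors through `B⟦-1⟧ ∈ T_{≥1}`.
  have : t.IsGE (Z⟦(-1 : ℤ)⟧) 1 := by
    rw [t.isGE_iff_orthogonal 0 1 (by norm_num)]
    intro W w hW
    obtain ⟨w', rfl⟩ := Triangle.coyoneda_exact₂ _ hT₂ w <|
      d.eq_zero_of_comp_mono_hom m hW.le _ <|
        (Category.assoc _ _ _).trans ((w ≫= comp_distTriang_mor_zero₁₂ _ hT₁).trans comp_zero)
    rw [t.zero_of_isLE_of_isGE w' 0 1 (by norm_num) hW
      ⟨t.ge_shift 0 (-1) 1 (by norm_num) _ B.property.2⟩, zero_comp]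
    rfl
  exact (t.isGE_of_shift Z 0 (-1) 1).ge

variable (d : TruncData t)

lemma isZero_τge_obj {n : ℤ} {X : C} (hX : IsZero X) : IsZero ((d.τge n).obj X) := by
  rw [IsZero.iff_id_eq_zero]
  apply (d.ge_univ n X _ (d.τgeGE n X)).1
  dsimp only
  rw [Category.comp_id, comp_zero]
  exact hX.eq_of_src _ _

lemma isIso_ι_app {n : ℤ} {X : C} (hX : t.le n X) : IsIso ((d.ι n).app X) := by
  obtain ⟨s, hs⟩ := (d.le_univ n X X hX).2 (𝟙 X)
  dsimp only at hs
  refine ⟨s, (d.le_univ n _ X (d.τleLE n X)).1 ?_, hs⟩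
  dsimp only
  rw [Category.assoc, hs]
  simp

lemma ge_τle_obj {n m : ℤ} (hnm : n ≤ m + 1) {E : C} (hE : t.ge n E) :
    t.ge n ((d.τle m).obj E) := by
  refine ((t.isGE_iff_orthogonal (n - 1) n (by omega) _).2 fun W g hW => ?_).ge
  apply (d.le_univ m W E (t.le_monotone (by omega) W hW.le)).1
  simpa using t.zero_of_isLE_of_isGE (g ≫ (d.ι m).app E) (n - 1) n (by omega) hW ⟨hE⟩

lemma isZero_H0_obj_of_ge {X : C} (hX : t.ge 1 X) : IsZero ((H0 d).obj X) := by
  have : t.IsLE ((d.τle 0).obj X) 0 := ⟨d.τleLE 0 X⟩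
  have : t.IsGE ((d.τle 0).obj X) 1 := ⟨d.ge_τle_obj (by norm_num) hX⟩
  exact IsZero.of_full_of_faithful_of_isZero (heartι t) _ (d.isZero_τge_obj (t.isZero _ 0 1))

lemma isZero_H0_obj_of_le {X : C} (hX : t.le (-1) X) : IsZero ((H0 d).obj X) := by
  have := d.isIso_ι_app (t.le_monotone (by norm_num : (-1 : ℤ) ≤ 0) X hX)
  have hle : t.le (-1) ((d.τle 0).obj X) :=
    (t.le (-1)).prop_of_iso (asIso ((d.ι 0).app X)).symm hX
  have : t.IsLE ((d.τge 0).obj ((d.τle 0).obj X)) (-1) := ⟨d.τge_LE 0 (-1) _ hle⟩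
  have : t.IsGE ((d.τge 0).obj ((d.τle 0).obj X)) 0 := ⟨d.τgeGE 0 _⟩
  exact IsZero.of_full_of_faithful_of_isZero (heartι t) _
    (t.isZero ((d.τge 0).obj ((d.τle 0).obj X)) (-1) 0)

lemma bijective_ι_app_comp {E : C} (hvan : ∀ Z, t.ge 0 Z → ∀ f : Z⟦(-1 : ℤ)⟧ ⟶ E, f = 0)
    (X : C) : Function.Bijective (fun f : X ⟶ E => (d.ι 0).app X ≫ f) := by
  constructor
  · intro f₁ f₂ h
    rw [← sub_eq_zero]
    have h' : (d.ι 0).app X ≫ (f₁ - f₂) = 0 := by rw [Preadditive.comp_sub, sub_eq_zero]; exact h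
    obtain ⟨g, hg⟩ := Triangle.yoneda_exact₂ _ (d.tri 0 X) (f₁ - f₂) h'
    rw [hg, eq_zero_of_ge_one hvan (by simpa using d.τgeGE (0 + 1) X) g, comp_zero]
    rfl
  · intro g
    obtain ⟨f, hf⟩ := Triangle.yoneda_exact₂ _ (inv_rot_of_distTriang _ (d.tri 0 X)) g
      (hvan _ (t.ge_antitone (by norm_num) _ (d.τgeGE (0 + 1) X)) _)
    exact ⟨f, hf.symm⟩

section

variable {E : C} (hE : t.ge 0 E)

abbrev τleHeart : Heart t := ⟨(d.τle 0).obj E, d.τleLE 0 E, d.ge_τle_obj (by norm_num) hE⟩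

lemma injective_τleHeart (hvan : ∀ Z, t.ge 0 Z → ∀ f : Z⟦(-1 : ℤ)⟧ ⟶ E, f = 0) :
    Injective (d.τleHeart hE) where
  factors {A B} g m _ := by
    obtain ⟨h, hh⟩ :=
      exists_comp_eq_of_isTMono hvan (d.isTMono_hom_of_mono m) (g.hom ≫ (d.ι 0).app E)
    obtain ⟨h₁, rfl⟩ := (d.le_univ 0 B.obj E B.property.1).2 h
    refine ⟨ObjectProperty.homMk h₁, ?_⟩
    ext
    exact (d.le_univ 0 A.obj E A.property.1).1 ((Category.assoc _ _ _).trans hh)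

noncomputable def yonedaIsoτleHeart (hvan : ∀ Z, t.ge 0 Z → ∀ f : Z⟦(-1 : ℤ)⟧ ⟶ E, f = 0) :
    yoneda.obj E ≅ (H0 d).op ⋙ yoneda.obj (d.τleHeart hE) :=
  let α : yoneda.obj E ⟶ (d.τle 0).op ⋙ yoneda.obj E :=
    Functor.whiskerRight (NatTrans.op (d.ι 0)) (yoneda.obj E)
  let β : (H0 d).op ⋙ yoneda.obj (d.τleHeart hE) ⟶ (d.τle 0).op ⋙ yoneda.obj E :=
    { app X := ↾fun u => (d.π 0).app _ ≫ u.hom ≫ (d.ι 0).app E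
      naturality X Y g := by
        have comm {P Q : C} (a : P ⟶ Q) (v : (d.τge 0).obj Q ⟶ (d.τle 0).obj E) :
            (d.π 0).app P ≫ ((d.τge 0).map a ≫ v) ≫ (d.ι 0).app E =
              a ≫ (d.π 0).app Q ≫ v ≫ (d.ι 0).app E := by
          simp only [Category.assoc]
          rw [← (d.π 0).naturality_assoc]
          rfl
        ext u
        exact comm ((d.τle 0).map g.unop) u.hom }
  have : IsIso α := by
    refine @NatIso.isIso_of_isIso_app _ _ _ _ _ _ _ fun X => ?_
    rw [isIso_iff_bijective]
    exact d.bijective_ι_app_comp hvan X.unop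
  have : IsIso β := by
    refine @NatIso.isIso_of_isIso_app _ _ _ _ _ _ _ fun X => ?_
    rw [isIso_iff_bijective]
    exact (d.ge_univ 0 _ E hE).comp <| (d.le_univ 0 _ E ((H0 d).obj X.unop).property.1).comp
      (ObjectProperty.fullyFaithfulι _).homEquiv.bijective
  asIso α ≪≫ (asIso β).symm

end

end TruncData

end DGP

/-- An object `E` of a triangulated category with a t-structure is a derived injective
(i.e. there are an injective object `I` of the heart and a natural isomorphism
`T(−, E) ≅ T^♥(H^0(−), I)`) if and only if `E ∈ T_{≥0}` and `T(Z[-1], E) ≅ 0` for every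
`Z ∈ T_{≥0}`. -/
theorem stmt7 {C : Type*} [Category C]
    [Preadditive C] [HasZeroObject C] [HasShift C ℤ] [∀ n : ℤ, (shiftFunctor C n).Additive]
    [Pretriangulated C]
    (t : TStructure C) (d : TruncData t) (E : C) :
    IsDerivedInjective d E ↔
      (t.ge 0 E ∧ ∀ (Z : C), t.ge 0 Z → ∀ f : Z⟦(-1 : ℤ)⟧ ⟶ E, f = 0) := by
  constructor
  · rintro ⟨I, -, ⟨e⟩⟩
    have hom_eq_zero {X : C} (hX : IsZero ((H0 d).obj X)) (f : X ⟶ E) : f = 0 :=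
      eq_zero_of_yoneda_iso_of_isZero e hX f
    refine ⟨((t.isGE_iff_orthogonal (-1) 0 (by norm_num) E).2 fun W g hW => ?_).ge,
      fun Z hZ f => hom_eq_zero (d.isZero_H0_obj_of_ge (t.ge_shift 0 (-1) 1 (by norm_num) Z hZ)) f⟩
    exact hom_eq_zero (d.isZero_H0_obj_of_le hW.le) g
  · rintro ⟨hE, hvan⟩
    exact ⟨d.τleHeart hE, d.injective_τleHeart hE hvan, ⟨d.yonedaIsoτleHeart hE hvan⟩⟩
end

section
/- Let T be a triangulated category with a t-structure such that T has small coproducts, every cohomological functor T^op → Ab that sends small coproducts in T to products is representable (Brown representability), and the cohomological functor H^0 : T → T^♥ preserves small coproducts. Then T has derived injectives: for every injective object I of the heart T^♥, the functor T^♥(H^0(−), I) : T^op → Ab is representable. -/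
open CategoryTheory Limits Pretriangulated Triangulated Opposite

open DGP Opposite

/-!
`X ↦ T^♥(H⁰ X, I)` sends coproducts to products because `H⁰` preserves them, so by Brown
representability it suffices to show that it is cohomological. As `I ∈ T_{≥0}`, maps
`H⁰ X ⟶ I` are maps `τ_{≤0} X ⟶ I`. Given a triangle `A → B → C'`, complete `τ_{≤0} B → τ_{≤0} C'`
to a triangle `N → τ_{≤0} B → τ_{≤0} C'`; then `N ∈ T_{≤1}`, and a map `τ_{≤0} B ⟶ I` killing
`τ_{≤0} A` kills `τ_{≤0} N`, so its restriction to `N` factors through `τ_{≥1} N`. The latter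
is `W⟦-1⟧` with `W` in the heart, and maps `W⟦-1⟧ ⟶ I` are extensions of `W` by `I` in the heart,
which split because `I` is injective.
-/

namespace DGP

lemma bijective_map_sigmaι_comp {C D : Type*} [Category C] [Category D] (G : C ⥤ D) {J : Type*}
    (X : J → C) [HasCoproduct X] [PreservesColimit (Discrete.functor X) G] (Y : D) :
    Function.Bijective (fun (y : G.obj (∐ X) ⟶ Y) (j : J) => G.map (Sigma.ι X j) ≫ y) := by
  let hc := isColimitOfHasCoproductOfPreservesColimit G X
  refine ⟨fun y₁ y₂ h => Cofan.IsColimit.hom_ext hc _ _ (congrFun h), fun p => ?_⟩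
  exact ⟨Cofan.IsColimit.desc hc p, funext (Cofan.IsColimit.fac hc p)⟩

variable {C : Type u} [Category.{v} C] [Preadditive C] [HasZeroObject C] [HasShift C ℤ]
  [∀ n : ℤ, (shiftFunctor C n).Additive] [Pretriangulated C] {t : TStructure C}

lemma mono_of_isTMono {A B : Heart t} (a : A ⟶ B) (ha : IsTMono t a.hom) : Mono a := by
  obtain ⟨W, g, h, hT, hW⟩ := ha
  refine Preadditive.mono_of_cancel_zero _ fun {Z} u hu => ?_
  have hu' : u.hom ≫ a.hom = 0 := congrArg (·.hom) hu
  obtain ⟨s, hs⟩ := Triangle.coyoneda_exact₂ _ (inv_rot_of_distTriang _ hT) u.hom hu'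
  have hs₀ : s = 0 := t.zero_of_isLE_of_isGE s 0 1 (by omega) ⟨Z.property.1⟩
    ⟨t.ge_shift 0 (-1) 1 (by omega) W hW⟩
  ext
  rw [hs, hs₀, zero_comp]
  rfl

lemma hom_eq_zero_of_injective (I : Heart t) [Injective I] {W : C} (hW₁ : t.le 1 W)
    (hW₂ : t.ge 1 W) (ψ : W ⟶ I.obj) : ψ = 0 := by
  obtain ⟨E, a, b, hT⟩ := distinguished_cocone_triangle ψ
  have hT' := rot_of_distTriang _ hT
  have hW'₁ : t.le 0 (W⟦(1 : ℤ)⟧) := t.le_shift 1 1 0 (by omega) W hW₁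
  have hW'₂ : t.ge 0 (W⟦(1 : ℤ)⟧) := t.ge_shift 1 1 0 (by omega) W hW₂
  let E' : Heart t := ⟨E, (t.isLE₂ _ hT' 0 ⟨I.property.1⟩ ⟨hW'₁⟩).le,
    (t.isGE₂ _ hT' 0 ⟨I.property.2⟩ ⟨hW'₂⟩).ge⟩
  let a' : I ⟶ E' := ObjectProperty.homMk a
  have : Mono a' := mono_of_isTMono a' ⟨_, _, _, hT', hW'₂⟩
  obtain ⟨r, hr⟩ := Injective.factors (𝟙 I) a'
  have hr' : a ≫ r.hom = 𝟙 I.obj := congrArg (·.hom) hr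
  calc ψ = ψ ≫ a ≫ r.hom := by rw [hr', Category.comp_id]
    _ = 0 := by
      rw [← Category.assoc, show ψ ≫ a = 0 from comp_distTriang_mor_zero₁₂ _ hT, zero_comp]

namespace TruncData

variable (d : TruncData t)

lemma ι_naturality (n : ℤ) {X Y : C} (f : X ⟶ Y) :
    (d.τle n).map f ≫ (d.ι n).app Y = (d.ι n).app X ≫ f :=
  (d.ι n).naturality f

lemma π_naturality (n : ℤ) {X Y : C} (f : X ⟶ Y) :
    f ≫ (d.π n).app Y = (d.π n).app X ≫ (d.τge n).map f :=
  (d.π n).naturality f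

instance (n : ℤ) : (d.τle n).PreservesZeroMorphisms where
  map_zero X Y := (d.le_univ n _ Y (d.τleLE n X)).injective <| by
    simp only [ι_naturality, comp_zero, zero_comp]

instance (n : ℤ) : (d.τge n).PreservesZeroMorphisms where
  map_zero X Y := (d.ge_univ n X _ (d.τgeGE n Y)).injective <| by
    simp only [← π_naturality, comp_zero, zero_comp]

lemma exists_comp_τle_map_eq {n : ℤ} {T : Triangle C} (hT : T ∈ distTriang C) {Y : C}
    (hY : t.le n Y) (φ : Y ⟶ (d.τle n).obj T.obj₂) (hφ : φ ≫ (d.τle n).map T.mor₂ = 0) :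
    ∃ α : Y ⟶ (d.τle n).obj T.obj₁, α ≫ (d.τle n).map T.mor₁ = φ := by
  have hφ' : (φ ≫ (d.ι n).app T.obj₂) ≫ T.mor₂ = 0 := by
    rw [Category.assoc, ← ι_naturality, ← Category.assoc, hφ, zero_comp]
  obtain ⟨α₀, hα₀⟩ := Triangle.coyoneda_exact₂ T hT _ hφ'
  obtain ⟨α, rfl⟩ := (d.le_univ n Y T.obj₁ hY).surjective α₀
  refine ⟨α, (d.le_univ n Y _ hY).injective ?_⟩
  simp only [Category.assoc, ι_naturality] at hα₀ ⊢
  exact hα₀.symm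

lemma exists_τle_map_comp_eq (I : Heart t) [Injective I] {T : Triangle C}
    (hT : T ∈ distTriang C) (v : (d.τle 0).obj T.obj₂ ⟶ I.obj)
    (hv : (d.τle 0).map T.mor₁ ≫ v = 0) :
    ∃ w : (d.τle 0).obj T.obj₃ ⟶ I.obj, (d.τle 0).map T.mor₂ ≫ w = v := by
  obtain ⟨N, ρ, δ, hK⟩ := distinguished_cocone_triangle₁ ((d.τle 0).map T.mor₂)
  suffices hρv : ρ ≫ v = 0 by
    obtain ⟨w, hw⟩ := Triangle.yoneda_exact₂ _ hK v hρv
    exact ⟨w, hw.symm⟩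
  have hN : t.le 1 N := by
    have : t.IsLE (N⟦(1 : ℤ)⟧) 0 :=
      t.isLE₂ _ (rot_of_distTriang _ (rot_of_distTriang _ hK)) 0 ⟨d.τleLE 0 _⟩
        ⟨t.le_monotone (by omega) _ (t.le_shift 0 1 (-1) (by omega) _ (d.τleLE 0 _))⟩
    exact (t.isLE_of_shift N 1 1 0).le
  have hιρv : (d.ι 0).app N ≫ ρ ≫ v = 0 := by
    have hρ : ρ ≫ (d.τle 0).map T.mor₂ = 0 := comp_distTriang_mor_zero₁₂ _ hK
    obtain ⟨α, hα⟩ := d.exists_comp_τle_map_eq hT (d.τleLE 0 N) ((d.ι 0).app N ≫ ρ)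
      (by rw [Category.assoc, hρ, comp_zero])
    rw [← Category.assoc, ← hα, Category.assoc, hv, comp_zero]
  obtain ⟨ψ, hψ⟩ := Triangle.yoneda_exact₂ _ (d.tri 0 N) _ hιρv
  have hψ₀ : ψ = 0 := hom_eq_zero_of_injective I (d.τge_LE _ 1 _ hN) (d.τgeGE _ _) ψ
  rw [hψ, hψ₀]
  exact comp_zero

end TruncData

variable (d : TruncData t)

instance : (H0 d).PreservesZeroMorphisms where
  map_zero X Y := by
    ext
    change (d.τge 0).map ((d.τle 0).map (0 : X ⟶ Y)) = 0
    simp only [Functor.map_zero]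

lemma exists_H0_map_comp_eq (I : Heart t) [Injective I] {T : Triangle C}
    (hT : T ∈ distTriang C) (u : (H0 d).obj T.obj₂ ⟶ I) (hu : (H0 d).map T.mor₁ ≫ u = 0) :
    ∃ z : (H0 d).obj T.obj₃ ⟶ I, (H0 d).map T.mor₂ ≫ z = u := by
  obtain ⟨u, rfl⟩ : ∃ u' : (d.τge 0).obj ((d.τle 0).obj T.obj₂) ⟶ I.obj,
    ObjectProperty.homMk u' = u := ObjectProperty.homMk_surjective u
  have hu' : (d.τge 0).map ((d.τle 0).map T.mor₁) ≫ u = 0 := congrArg (·.hom) hu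
  have hv : (d.τle 0).map T.mor₁ ≫ (d.π 0).app _ ≫ u = 0 := by
    rw [← Category.assoc, d.π_naturality, Category.assoc, hu', comp_zero]
  obtain ⟨w, hw⟩ := d.exists_τle_map_comp_eq I hT _ hv
  obtain ⟨z, rfl⟩ := (d.ge_univ 0 _ I.obj I.property.2).surjective w
  refine ⟨ObjectProperty.homMk z, ?_⟩
  ext
  apply (d.ge_univ 0 _ I.obj I.property.2).injective
  change (d.π 0).app _ ≫ (d.τge 0).map ((d.τle 0).map T.mor₂) ≫ z = (d.π 0).app _ ≫ u
  rw [← Category.assoc, ← d.π_naturality, Category.assoc]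
  exact hw

end DGP

/-- Let `T` be a triangulated category with a t-structure, which has small coproducts and
satisfies Brown representability (every cohomological functor `Tᵒᵖ ⥤ Ab` sending small
coproducts to products is representable), and whose cohomological functor
`H^0 : T ⥤ T^♥` preserves small coproducts. Then `T` has derived injectives: for every
injective object `I` of the heart, the functor `T^♥(H^0(−), I)` is representable. -/
theorem stmt9 {C : Type u} [Category.{v} C]
    [Preadditive C] [HasZeroObject C] [HasShift C ℤ] [∀ n : ℤ, (shiftFunctor C n).Additive]
    [Pretriangulated C] [HasCoproducts.{v} C]
    (t : TStructure C) (d : TruncData t)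
    (brown : ∀ F : Cᵒᵖ ⥤ AddCommGrpCat.{v},
      -- `F` is cohomological
      (∀ T' : Triangle C, T' ∈ (distTriang C) →
        ∀ y : F.obj (op T'.obj₂), F.map T'.mor₁.op y = 0 ↔
          ∃ z : F.obj (op T'.obj₃), F.map T'.mor₂.op z = y) →
      -- `F` sends small coproducts to products
      (∀ (J : Type v) (X : J → C),
        Function.Bijective
          (fun (y : F.obj (op (∐ X))) (j : J) => F.map (Sigma.ι X j).op y)) →
      -- then `F` is representable
      ∃ L : C, Nonempty (yoneda.obj L ≅ F ⋙ forget AddCommGrpCat))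
    (hH0 : ∀ J : Type v, Nonempty (PreservesColimitsOfShape (Discrete J) (H0 d))) :
    ∀ I : Heart t, Injective I →
      ∃ L : C, Nonempty (yoneda.obj L ≅ (H0 d).op ⋙ yoneda.obj I) := by
  intro I hI
  let F : Cᵒᵖ ⥤ AddCommGrpCat.{v} := (H0 d).op ⋙ preadditiveYoneda.obj I
  have hF_cohomological : ∀ T' : Triangle C, T' ∈ (distTriang C) →
      ∀ y : F.obj (op T'.obj₂), F.map T'.mor₁.op y = 0 ↔
        ∃ z : F.obj (op T'.obj₃), F.map T'.mor₂.op z = y := by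
    intro T hT y
    refine ⟨exists_H0_map_comp_eq d I hT y, ?_⟩
    rintro ⟨z, rfl⟩
    let z' : (H0 d).obj T.obj₃ ⟶ I := z
    change (H0 d).map T.mor₁ ≫ (H0 d).map T.mor₂ ≫ z' = 0
    rw [← Category.assoc, ← Functor.map_comp, comp_distTriang_mor_zero₁₂ _ hT,
      Functor.map_zero, zero_comp]
  have hF_products : ∀ (J : Type v) (X : J → C), Function.Bijective
      (fun (y : F.obj (op (∐ X))) (j : J) => F.map (Sigma.ι X j).op y) := by
    intro J X
    obtain ⟨_⟩ := hH0 J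
    exact bijective_map_sigmaι_comp (H0 d) X I
  obtain ⟨L, ⟨e⟩⟩ := brown F hF_cohomological hF_products
  exact ⟨L, ⟨e⟩⟩
end

section
/- Let T be a triangulated category with a t-structure and let I be an object of the heart T^♥. Then I is an injective object of the abelian category T^♥ if and only if T(Z[-1], I) ≅ 0 for every Z ∈ T^♥. -/
open CategoryTheory Limits Pretriangulated Triangulated Opposite

open DGP

/-!
A monomorphism `i : A ⟶ B` of the heart has a cone `X⟦1⟧` with `X ∈ T^{[0,1]}`, and a map
`g : A ⟶ I` extends along `i` iff the composite `X ⟶ A ⟶ I` vanishes. Truncating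
`K ⟶ X ⟶ G` with `K = τ≤0 X` in the heart and `G⟦1⟧` in the heart, the map `K ⟶ A` is zero
because `i` is mono, and `G ⟶ I` is zero by the hypothesis. Conversely, the cone of
`f : Z⟦-1⟧ ⟶ I` lies in the heart and `I ⟶ cone f` is a monomorphism there; a retraction of it
kills `f`.
-/

namespace DGP

variable {C : Type*} [Category C] [Preadditive C] [HasZeroObject C] [HasShift C ℤ]
  [∀ n : ℤ, (shiftFunctor C n).Additive] [Pretriangulated C] {t : TStructure C}

instance (X : Heart t) : t.IsLE X.obj 0 := ⟨X.property.1⟩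

instance (X : Heart t) : t.IsGE X.obj 0 := ⟨X.property.2⟩

lemma mono_homMk_of_distTriang {X : C} {A B : Heart t} (f : X ⟶ A.obj) (g : A.obj ⟶ B.obj)
    (h : B.obj ⟶ X⟦(1 : ℤ)⟧) (hT : Triangle.mk f g h ∈ distTriang C) [t.IsGE X 1] :
    Mono (ObjectProperty.homMk g : A ⟶ B) := by
  refine Preadditive.mono_of_cancel_zero _ fun {K} a ha => ObjectProperty.hom_ext _ ?_
  obtain ⟨k, hk⟩ := Triangle.coyoneda_exact₂ _ hT a.hom (congr_arg (·.hom) ha)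
  rw [hk, t.zero_of_isLE_of_isGE k 0 1 (by lia) inferInstance ‹t.IsGE X 1›, zero_comp]
  rfl

lemma hom_shift_eq_zero_of_injective {I : Heart t} [Injective I] (Z : Heart t)
    (f : Z.obj⟦(-1 : ℤ)⟧ ⟶ I.obj) : f = 0 := by
  obtain ⟨W, g, h, hT⟩ := distinguished_cocone_triangle f
  have := t.isLE_shift Z.obj 0 (-1) 1
  have := t.isGE_shift Z.obj 0 (-1) 1
  have := t.isLE_shift (Z.obj⟦(-1 : ℤ)⟧) 1 1 0
  have := t.isGE_shift (Z.obj⟦(-1 : ℤ)⟧) 1 1 0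
  let W' : Heart t :=
    ⟨W, (t.isLE₂ _ (rot_of_distTriang _ hT) 0 (inferInstanceAs (t.IsLE I.obj 0)) ‹_›).le,
      (t.isGE₂ _ (rot_of_distTriang _ hT) 0 (inferInstanceAs (t.IsGE I.obj 0)) ‹_›).ge⟩
  have := mono_homMk_of_distTriang (B := W') f g h hT
  obtain ⟨r, hr⟩ := Injective.factors (𝟙 I) (ObjectProperty.homMk g : I ⟶ W')
  have hgr : g ≫ r.hom = 𝟙 I.obj := congr_arg (·.hom) hr
  have hfg : f ≫ g = 0 := comp_distTriang_mor_zero₁₂ _ hT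
  calc f = (f ≫ g) ≫ r.hom := by rw [Category.assoc, hgr, Category.comp_id]
    _ = 0 := by rw [hfg, zero_comp]

lemma eq_zero_of_isLE_one_of_isGE_one {I : Heart t}
    (hI : ∀ (Z : Heart t) (f : Z.obj⟦(-1 : ℤ)⟧ ⟶ I.obj), f = 0)
    {G : C} [t.IsLE G 1] [t.IsGE G 1] (q : G ⟶ I.obj) : q = 0 := by
  let e : G ≅ G⟦(1 : ℤ)⟧⟦(-1 : ℤ)⟧ := (shiftEquiv C (1 : ℤ)).unitIso.app G
  have := t.isLE_shift G 1 1 0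
  have := t.isGE_shift G 1 1 0
  rw [← e.hom_inv_id_assoc q, hI ⟨G⟦(1 : ℤ)⟧, t.le_of_isLE _ 0, t.ge_of_isGE _ 0⟩ (e.inv ≫ q),
    comp_zero]

lemma eq_zero_of_forall_heart_comp_eq_zero {I : Heart t}
    (hI : ∀ (Z : Heart t) (f : Z.obj⟦(-1 : ℤ)⟧ ⟶ I.obj), f = 0)
    {X : C} [t.IsGE X 0] [t.IsLE X 1] (u : X ⟶ I.obj)
    (hu : ∀ (K : Heart t) (k : K.obj ⟶ X), k ≫ u = 0) : u = 0 := by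
  obtain ⟨K, G, hK, hG, a, b, c, hT⟩ := t.exists_triangle X 0 1 rfl
  have : t.IsLE K 0 := ⟨hK⟩
  have : t.IsGE G 1 := ⟨hG⟩
  have : t.IsGE (G⟦(-1 : ℤ)⟧) 0 := by
    have := t.isGE_shift G 1 (-1) 2
    exact t.isGE_of_ge _ 0 2
  have : t.IsLE (K⟦(1 : ℤ)⟧) 1 := by
    have := t.isLE_shift K 0 1 (-1)
    exact t.isLE_of_le _ (-1) 1
  have hKge : t.IsGE K 0 := t.isGE₂ _ (inv_rot_of_distTriang _ hT) 0 ‹_› ‹_›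
  have : t.IsLE G 1 := t.isLE₂ _ (rot_of_distTriang _ hT) 1 ‹_› ‹_›
  obtain ⟨v, hv⟩ : ∃ v : G ⟶ I.obj, u = b ≫ v :=
    Triangle.yoneda_exact₂ _ hT u (hu ⟨K, hK, hKge.ge⟩ a)
  rw [hv, eq_zero_of_isLE_one_of_isGE_one hI v, comp_zero]

lemma injective_of_hom_shift_eq_zero {I : Heart t}
    (hI : ∀ (Z : Heart t) (f : Z.obj⟦(-1 : ℤ)⟧ ⟶ I.obj), f = 0) : Injective I where
  factors {A B} g i _ := by
    obtain ⟨X, f, δ, hT⟩ := distinguished_cocone_triangle₁ i.hom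
    have : t.IsLE (B.obj⟦(-1 : ℤ)⟧) 1 := t.isLE_shift _ 0 (-1) 1
    have : t.IsGE (B.obj⟦(-1 : ℤ)⟧) 0 := by
      have := t.isGE_shift B.obj 0 (-1) 1
      exact t.isGE_of_ge _ 0 1
    have : t.IsLE X 1 := t.isLE₂ _ (inv_rot_of_distTriang _ hT) 1 ‹_› (t.isLE_of_le A.obj 0 1)
    have : t.IsGE X 0 :=
      t.isGE₂ _ (inv_rot_of_distTriang _ hT) 0 ‹_› (inferInstanceAs (t.IsGE A.obj 0))
    have hfi : f ≫ i.hom = 0 := comp_distTriang_mor_zero₁₂ _ hT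
    have hfg : f ≫ g.hom = 0 := eq_zero_of_forall_heart_comp_eq_zero hI _ fun K k => by
      have hkf : (ObjectProperty.homMk (k ≫ f) : K ⟶ A) = 0 :=
        (cancel_mono i).1 (by ext; simp [hfi])
      replace hkf : k ≫ f = 0 := congr_arg (·.hom) hkf
      rw [← Category.assoc, hkf, zero_comp]
    obtain ⟨h, hh⟩ : ∃ h : B.obj ⟶ I.obj, g.hom = i.hom ≫ h :=
      Triangle.yoneda_exact₂ _ hT g.hom hfg
    exact ⟨ObjectProperty.homMk h, by ext; exact hh.symm⟩

end DGP

/-- Let `T` be a triangulated category with a t-structure and let `I` be an object of the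
heart. Then `I` is an injective object of the heart if and only if `T(Z[-1], I) ≅ 0` for
every `Z` in the heart. -/
theorem stmt17 {C : Type*} [Category C]
    [Preadditive C] [HasZeroObject C] [HasShift C ℤ] [∀ n : ℤ, (shiftFunctor C n).Additive]
    [Pretriangulated C]
    (t : TStructure C) (I : Heart t) :
    Injective I ↔
      ∀ (Z : Heart t) (f : ((heartι t).obj Z)⟦(-1 : ℤ)⟧ ⟶ (heartι t).obj I), f = 0 :=
  ⟨fun _ => hom_shift_eq_zero_of_injective, injective_of_hom_shift_eq_zero⟩
end
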